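/- arXiv:1409.7535 — 2 statements merged into one kernel-verified Lean document; each statement's English description precedes it below -/
import Mathlib

section
/- Suppose m ≥ 1 and D is a (k,m)-critical oriented graph in which every vertex v satisfies d⁺(v) = d⁻(v) = (k-1)m. Then k ≤ 2. -/
open Finset

variable {V : Type*}

section Defs
variable [Fintype V] [DecidableEq V]

/-- Number of out-neighbors of `v` inside the vertex set `S`. -/
def outDegOn (A : V → V → Prop) [DecidableRel A] (S : Finset V) (v : V) : ℕ :=
  (S.filter (fun w => A v w)).card

/-- Number of in-neighbors of `v` inside the vertex set `S`. -/
def inDegOn (A : V → V → Prop) [DecidableRel A] (S : Finset V) (v : V) : ℕ :=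
  (S.filter (fun w => A w v)).card

/-- The induced subdigraph on `S` is weakly `m`-degenerate: every nonempty induced
subdigraph has a vertex of out-degree `< m` or in-degree `< m`. -/
def WeaklyDegOn (A : V → V → Prop) [DecidableRel A] (m : ℕ) (S : Finset V) : Prop :=
  ∀ T ⊆ S, T.Nonempty → ∃ v ∈ T, outDegOn A T v < m ∨ inDegOn A T v < m

/-- The induced subdigraph on `S` has no directed cycle. -/
def AcyclicOn (A : V → V → Prop) (S : Finset V) : Prop :=
  ¬ ∃ v ∈ S, Relation.TransGen (fun x y => x ∈ S ∧ y ∈ S ∧ A x y) v v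

/-- The `m`-degenerate chromatic number of the subdigraph induced on `S`. -/
noncomputable def chiDegOn (A : V → V → Prop) [DecidableRel A] (m : ℕ) (S : Finset V) : ℕ :=
  sInf {k | ∃ c : V → Fin k, ∀ i, WeaklyDegOn A m (S.filter (fun v => c v = i))}

/-- The acyclic (dichromatic) number of the subdigraph induced on `S`. -/
noncomputable def chiAcyclicOn (A : V → V → Prop) (S : Finset V) : ℕ :=
  sInf {k | ∃ c : V → Fin k, ∀ i, AcyclicOn A (S.filter (fun v => c v = i))}

/-- `Δ̄(D)`: the maximum over vertices of the arithmetic mean of out- and in-degree. -/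
def barDelta (A : V → V → Prop) [DecidableRel A] : ℚ :=
  ((Finset.univ.sup (fun v => outDegOn A Finset.univ v + inDegOn A Finset.univ v) : ℕ) : ℚ) / 2

/-- `Δ̄` of the subdigraph induced on `S`. -/
def barDeltaOn (A : V → V → Prop) [DecidableRel A] (S : Finset V) : ℚ :=
  ((S.sup (fun v => outDegOn A S v + inDegOn A S v) : ℕ) : ℚ) / 2

end Defs

/-- The subdigraph induced on `S` is weakly connected (underlying undirected graph
is connected). -/
def WeaklyConnectedOn (A : V → V → Prop) (S : Finset V) : Prop :=
  ∀ x ∈ S, ∀ y ∈ S,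
    Relation.ReflTransGen (fun a b => a ∈ S ∧ b ∈ S ∧ (A a b ∨ A b a)) x y

/-- An oriented graph: no directed 2-cycles (and hence no loops). -/
def Oriented (A : V → V → Prop) : Prop := ∀ x y, A x y → ¬ A y x

/-- An induced directed 4-cycle a→b→c→d→a (no reversed edges on the cycle). -/
def CyclePattern (A : V → V → Prop) (a b c d : V) : Prop :=
  A a b ∧ A b c ∧ A c d ∧ A d a ∧ ¬A b a ∧ ¬A c b ∧ ¬A d c ∧ ¬A a d

/-- F₁: induced directed 4-cycle with no chords. -/
def F1Pattern (A : V → V → Prop) (a b c d : V) : Prop :=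
  CyclePattern A a b c d ∧ ¬A b d ∧ ¬A d b ∧ ¬A c a ∧ ¬A a c

/-- F₂: induced directed 4-cycle plus the chord b→d. -/
def F2Pattern (A : V → V → Prop) (a b c d : V) : Prop :=
  CyclePattern A a b c d ∧ A b d ∧ ¬A d b ∧ ¬A c a ∧ ¬A a c

/-- G₁: induced directed 4-cycle plus the chord c→a. -/
def G1Pattern (A : V → V → Prop) (a b c d : V) : Prop :=
  CyclePattern A a b c d ∧ ¬A b d ∧ ¬A d b ∧ A c a ∧ ¬A a c

/-- G₂: induced directed 4-cycle plus both chords b→d and c→a. -/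
def G2Pattern (A : V → V → Prop) (a b c d : V) : Prop :=
  CyclePattern A a b c d ∧ A b d ∧ ¬A d b ∧ A c a ∧ ¬A a c

/-- `D` contains none of F₁, F₂, G₁, G₂ as an induced subdigraph. -/
def AvoidsFG (A : V → V → Prop) : Prop :=
  ¬ ∃ a b c d : V, a ≠ b ∧ a ≠ c ∧ a ≠ d ∧ b ≠ c ∧ b ≠ d ∧ c ≠ d ∧
    (F1Pattern A a b c d ∨ F2Pattern A a b c d ∨ G1Pattern A a b c d ∨ G2Pattern A a b c d)

section Count
variable [Fintype V] [DecidableEq V]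

/-- `e(S,T)`: the number of edges pointing from `S` to `T`. -/
def eCount (A : V → V → Prop) [DecidableRel A] (S T : Finset V) : ℕ :=
  ∑ x ∈ S, (T.filter (fun y => A x y)).card

/-- The quantity `f(V₁,…,V_s)` from Catlin's argument. -/
def fval (A : V → V → Prop) [DecidableRel A] {s : ℕ} (Δ : Fin s → ℕ)
    (P : Fin s → Finset V) : ℚ :=
  ∑ i, (Δ i : ℚ) * (P i).card +
    (1/2) * ∑ i, ∑ j ∈ Finset.univ.filter (fun j => i < j),
      ((eCount A (P i) (P j) : ℚ) + (eCount A (P j) (P i) : ℚ))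

end Count

/-! Colour `D - t` with `k - 1` weakly `m`-degenerate classes and regard the uncoloured vertex `t`
as a token. As `t` cannot join any class and has exactly `(k - 1) m` out- and in-neighbours, every
class contains exactly `m` of each; so the token can slide to any neighbour `s`, `t` taking the
colour of `s`. Comparing the colourings produced by different token moves shows that, when `k ≥ 3`,
a path `o → a → x` with `c x ≠ c a` (token at `o`) yields a path `a → x → y` of the same kind
(token at `a`) whose vertices reachable from `y` outside the closed neighbourhood of `a` form a
proper subset of those reachable from `x` outside the closed neighbourhood of `o`. This infinite
descent is impossible. -/

open Function Relation

section Coloring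

variable {A : V → V → Prop} [DecidableRel A] {m : ℕ} {S T : Finset V} {s t : V}

def IsDegColoring (A : V → V → Prop) [DecidableRel A] (m : ℕ) (S : Finset V)
    {ι : Type*} [DecidableEq ι] (c : V → ι) : Prop :=
  ∀ i, WeaklyDegOn A m (S.filter (c · = i))

theorem WeaklyDegOn.mono (h : S ⊆ T) (hT : WeaklyDegOn A m T) : WeaklyDegOn A m S :=
  fun U hU => hT U (hU.trans h)

theorem weaklyDegOn_singleton (hm : 1 ≤ m) (ht : ¬ A t t) : WeaklyDegOn A m {t} := by
  intro U hU hne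
  obtain rfl : U = {t} := (subset_singleton_iff.mp hU).resolve_left hne.ne_empty
  refine ⟨t, mem_singleton_self t, Or.inl ?_⟩
  simp only [outDegOn, filter_singleton, ht, if_false, card_empty]
  omega

theorem outDegOn_mono (h : S ⊆ T) (v : V) : outDegOn A S v ≤ outDegOn A T v :=
  card_le_card (filter_subset_filter _ h)

theorem inDegOn_mono (h : S ⊆ T) (v : V) : inDegOn A S v ≤ inDegOn A T v :=
  card_le_card (filter_subset_filter _ h)

theorem WeaklyDegOn.insert [DecidableEq V] (hS : WeaklyDegOn A m S)
    (ht : outDegOn A (insert t S) t < m ∨ inDegOn A (insert t S) t < m) :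
    WeaklyDegOn A m (insert t S) := by
  intro U hU hne
  by_cases htU : t ∈ U
  · exact ⟨t, htU, ht.imp (lt_of_le_of_lt (outDegOn_mono hU t))
      (lt_of_le_of_lt (inDegOn_mono hU t))⟩
  · refine hS U (fun v hv => (mem_insert.mp (hU hv)).resolve_left ?_) hne
    rintro rfl
    exact htU hv

section DecidableEq

variable [DecidableEq V]

theorem outDegOn_insert_self (ht : ¬ A t t) : outDegOn A (insert t S) t = outDegOn A S t := by
  simp [outDegOn, filter_insert, ht]

theorem outDegOn_erase_self (ht : ¬ A t t) : outDegOn A (S.erase t) t = outDegOn A S t := by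
  simp [outDegOn, filter_erase, ht]

theorem outDegOn_erase_lt (hs : s ∈ S) (hts : A t s) :
    outDegOn A (S.erase s) t < outDegOn A S t := by
  rw [outDegOn, filter_erase]
  exact card_erase_lt_of_mem (mem_filter.mpr ⟨hs, hts⟩)

end DecidableEq

theorem sum_outDegOn_filter {ι : Type*} [Fintype ι] [DecidableEq ι] (c : V → ι) (v : V) :
    ∑ i, outDegOn A (S.filter (c · = i)) v = outDegOn A S v := by
  rw [outDegOn, card_eq_sum_card_fiberwise (f := c) (t := univ)
    fun _ _ => mem_coe.mpr (mem_univ _)]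
  simp only [outDegOn, filter_comm]

theorem weaklyDegOn_reverse : WeaklyDegOn (fun x y => A y x) m S ↔ WeaklyDegOn A m S :=
  forall₂_congr fun _ _ => imp_congr_right fun _ =>
    exists_congr fun _ => and_congr_right fun _ => or_comm

theorem isDegColoring_reverse {ι : Type*} [DecidableEq ι] {c : V → ι} :
    IsDegColoring (fun x y => A y x) m S c ↔ IsDegColoring A m S c :=
  forall_congr' fun _ => weaklyDegOn_reverse

theorem IsDegColoring.comp_injective {ι κ : Type*} [DecidableEq ι] [DecidableEq κ] {c : V → ι}
    (hc : IsDegColoring A m S c) {f : ι → κ} (hf : Injective f) : IsDegColoring A m S (f ∘ c) := by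
  intro j
  by_cases hj : ∃ i, f i = j
  · obtain ⟨i, rfl⟩ := hj
    simpa only [comp_apply, hf.eq_iff] using hc i
  · rintro U hU ⟨v, hv⟩
    exact absurd (mem_filter.mp (hU hv)).2 fun h => hj ⟨c v, h⟩

end Coloring

theorem Oriented.irrefl {A : V → V → Prop} (h : Oriented A) (v : V) : ¬ A v v :=
  fun hv => h v v hv hv

def Adjacent (A : V → V → Prop) (x y : V) : Prop := A x y ∨ A y x

def avoidReach (A : V → V → Prop) (o x : V) : Set V :=
  {z | ReflTransGen (fun b z => Adjacent A b z ∧ ¬ Adjacent A o z ∧ z ≠ o) x z}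

theorem avoidReach_subset {A : V → V → Prop} {o x : V} (hx : ¬ Adjacent A o x) (hxo : x ≠ o) :
    avoidReach A o x ⊆ {z | ¬ Adjacent A o z ∧ z ≠ o} := by
  intro z hz
  rcases hz.cases_tail with rfl | ⟨_, -, hbz⟩
  exacts [⟨hx, hxo⟩, hbz.2]


section RegularCritical

variable [Fintype V] [DecidableEq V]

/-- `D` is `(k, m)`-critical with `d⁺(v) = d⁻(v) = (k - 1) m` for all `v`, the `k - 1` colours
being the elements of `ι`. -/
structure IsRegularCritical (A : V → V → Prop) [DecidableRel A] (m : ℕ)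
    (ι : Type*) [Fintype ι] [DecidableEq ι] : Prop where
  oriented : Oriented A
  one_le : 1 ≤ m
  not_isDegColoring : ∀ c : V → ι, ¬ IsDegColoring A m univ c
  exists_isDegColoring_erase : ∀ v, ∃ c : V → ι, IsDegColoring A m (univ.erase v) c
  outDegOn_univ : ∀ v, outDegOn A univ v = Fintype.card ι * m
  inDegOn_univ : ∀ v, inDegOn A univ v = Fintype.card ι * m

/-- Token moves starting from the colouring `c` of `D - t` have brought the token to `s`,
recolouring the out-neighbour `w` of `t` but no other out-neighbour of `t`. -/
def Detour (A : V → V → Prop) [DecidableRel A] (m : ℕ) {ι : Type*} [DecidableEq ι]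
    (t w : V) (c : V → ι) (s : V) : Prop :=
  ∃ c' : V → ι, IsDegColoring A m (univ.erase s) c' ∧ c' w ≠ c w ∧
    ∀ v, A t v → v ≠ w → c' v = c v

namespace IsRegularCritical

variable {A : V → V → Prop} [DecidableRel A] {m : ℕ} {ι : Type*} [Fintype ι] [DecidableEq ι]
  (hD : IsRegularCritical A m ι) {c c' : V → ι} {s t w : V}
include hD

theorem reverse : IsRegularCritical (fun x y => A y x) m ι where
  oriented x y h := hD.oriented y x h
  one_le := hD.one_le
  not_isDegColoring c hc := hD.not_isDegColoring c (isDegColoring_reverse.mp hc)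
  exists_isDegColoring_erase v :=
    (hD.exists_isDegColoring_erase v).imp fun _ hc => isDegColoring_reverse.mpr hc
  outDegOn_univ := hD.inDegOn_univ
  inDegOn_univ := hD.outDegOn_univ

theorem nonempty : Nonempty V :=
  not_isEmpty_iff.mp fun _ => hD.not_isDegColoring isEmptyElim fun _ _ _ ⟨v, _⟩ => isEmptyElim v

theorem le_outDegOn_colorClass (hc : IsDegColoring A m (univ.erase t) c) (j : ι) :
    m ≤ outDegOn A ((univ.erase t).filter (c · = j)) t := by
  by_contra! hlt
  refine hD.not_isDegColoring (update c t j) fun i => ?_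
  by_cases hij : i = j
  · subst hij
    have hclass :
        univ.filter (update c t i · = i) = insert t ((univ.erase t).filter (c · = i)) := by
      ext v
      by_cases hv : v = t <;> simp [hv]
    rw [hclass]
    exact (hc i).insert (Or.inl (by rwa [outDegOn_insert_self (hD.oriented.irrefl t)]))
  · have hclass : univ.filter (update c t j · = i) = (univ.erase t).filter (c · = i) := by
      ext v
      by_cases hv : v = t <;> simp [hv, Ne.symm hij]
    rw [hclass]
    exact hc i

/-- Each class receives at least `m` arcs from `t` (else `t` could join it), and the degree
`(k - 1) m` leaves no slack. -/
theorem outDegOn_colorClass (hc : IsDegColoring A m (univ.erase t) c) (j : ι) :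
    outDegOn A ((univ.erase t).filter (c · = j)) t = m := by
  have hsum : ∑ i, outDegOn A ((univ.erase t).filter (c · = i)) t = ∑ _i : ι, m := by
    rw [sum_outDegOn_filter, outDegOn_erase_self (hD.oriented.irrefl t), hD.outDegOn_univ,
      sum_const, card_univ, smul_eq_mul]
  exact ((sum_eq_sum_iff_of_le fun i _ => hD.le_outDegOn_colorClass hc i).mp hsum.symm j
    (mem_univ j)).symm

theorem isDegColoring_update_of_adj (hc : IsDegColoring A m (univ.erase t) c) (hts : A t s) :
    IsDegColoring A m (univ.erase s) (update c t (c s)) := by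
  have hst : s ≠ t := fun h => hD.oriented.irrefl t (h ▸ hts)
  intro i
  set C := (univ.erase t).filter (c · = i)
  by_cases hi : i = c s
  · subst hi
    have hs : s ∈ C := by simp [C, hst]
    have hclass : (univ.erase s).filter (update c t (c s) · = c s) = insert t (C.erase s) := by
      ext v
      by_cases hv : v = t
      · simp [C, hv, Ne.symm hst]
      · by_cases hvs : v = s <;> simp [C, hv, hvs, hst]
    rw [hclass]
    refine ((hc (c s)).mono (erase_subset s C)).insert (Or.inl ?_)
    rw [outDegOn_insert_self (hD.oriented.irrefl t)]
    exact (outDegOn_erase_lt hs hts).trans_eq (hD.outDegOn_colorClass hc (c s))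
  · refine (hc i).mono fun v hv => ?_
    have hvt : v ≠ t := by
      rintro rfl
      simp [Ne.symm hi] at hv
    simp_all

theorem isDegColoring_update (hc : IsDegColoring A m (univ.erase t) c) (hts : Adjacent A t s) :
    IsDegColoring A m (univ.erase s) (update c t (c s)) :=
  hts.elim (hD.isDegColoring_update_of_adj hc) fun hst =>
    isDegColoring_reverse.mp (hD.reverse.isDegColoring_update_of_adj
      (isDegColoring_reverse.mpr hc) hst)

theorem false_of_recolor (hc : IsDegColoring A m (univ.erase t) c)
    (hc' : IsDegColoring A m (univ.erase t) c') (htw : A t w) (hw : c' w ≠ c w)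
    (hagree : ∀ v, A t v → v ≠ w → c' v = c v) : False := by
  have hsub : ((univ.erase t).filter (c' · = c w)).filter (A t ·) ⊆
      (((univ.erase t).filter (c · = c w)).filter (A t ·)).erase w := by
    intro v hv
    simp only [mem_filter, mem_erase] at hv ⊢
    have hvw : v ≠ w := by
      rintro rfl
      exact hw hv.1.2
    exact ⟨hvw, ⟨hv.1.1, hagree v hv.2 hvw ▸ hv.1.2⟩, hv.2⟩
  have hwt : w ≠ t := fun h => hD.oriented.irrefl t (h ▸ htw)
  have hmem : w ∈ ((univ.erase t).filter (c · = c w)).filter (A t ·) := by simp [htw, hwt]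
  have hlt := (card_le_card hsub).trans_lt (card_erase_lt_of_mem hmem)
  have h₁ := hD.outDegOn_colorClass hc' (c w)
  have h₂ := hD.outDegOn_colorClass hc (c w)
  rw [outDegOn] at h₁ h₂
  omega

theorem detour_start (hc : IsDegColoring A m (univ.erase t) c) (htw : A t w)
    (hws : Adjacent A w s) (hst : s ≠ t) (hne : c s ≠ c w) : Detour A m t w c s := by
  have hwt : w ≠ t := fun h => hD.oriented.irrefl t (h ▸ htw)
  refine ⟨update (update c t (c w)) w (c s), ?_, by simpa using hne, fun v htv hvw => ?_⟩
  · simpa [update_of_ne hst] using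
      hD.isDegColoring_update (hD.isDegColoring_update hc (Or.inl htw)) hws
  · have hvt : v ≠ t := fun h => hD.oriented.irrefl t (h ▸ htv)
    simp [update_of_ne hvw, update_of_ne hvt]

theorem detour_step (h : Detour A m t w c s) (htw : A t w) (hts : ¬ A t s) {s' : V}
    (hss' : Adjacent A s s') : Detour A m t w c s' := by
  obtain ⟨c', hc', hw, hagree⟩ := h
  have hne : ∀ v, A t v → v ≠ s := fun v htv hvs => hts (hvs ▸ htv)
  refine ⟨update c' s (c' s'), hD.isDegColoring_update hc' hss', ?_, fun v htv hvw => ?_⟩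
  · rwa [update_of_ne (hne w htw)]
  · rw [update_of_ne (hne v htv), hagree v htv hvw]

theorem false_of_detour_adj (hc : IsDegColoring A m (univ.erase t) c) (htw : A t w)
    (h : Detour A m t w c s) (hst : A s t) : False := by
  obtain ⟨c', hc', hw, hagree⟩ := hD.detour_step h htw (hD.oriented s t hst) (Or.inl hst)
  exact hD.false_of_recolor hc hc' htw hw hagree

theorem detour_of_mem_avoidReach (h : Detour A m t w c s) (htw : A t w) (hts : ¬ A t s) {z : V}
    (hz : z ∈ avoidReach A t s) : Detour A m t w c z ∧ ¬ A t z := by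
  induction hz with
  | refl => exact ⟨h, hts⟩
  | tail _ hbz ih => exact ⟨hD.detour_step ih.1 htw ih.2 hbz.1, fun h => hbz.2.1 (Or.inl h)⟩

theorem color_eq_of_adj_of_outNeighbors {o a x : V} (hc : IsDegColoring A m (univ.erase o) c)
    (hoa : A o a) (hox : A o x) (hxa : A x a) : c x = c a := by
  by_contra hne
  have hao : a ≠ o := fun h => hD.oriented.irrefl o (h ▸ hoa)
  have hxo : x ≠ o := fun h => hD.oriented.irrefl o (h ▸ hox)
  have hvia_a := hD.isDegColoring_update (hD.isDegColoring_update hc (Or.inl hoa)) (Or.inr hxa)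
  refine hD.false_of_recolor (hD.isDegColoring_update hc (Or.inl hox)) hvia_a hxa
    (by simpa [update_of_ne hxo, update_of_ne hao] using hne) fun v hxv hva => ?_
  have hvo : v ≠ o := fun h => hD.oriented o x hox (h ▸ hxv)
  simp [update_of_ne hva, update_of_ne hvo]

theorem color_eq_of_outNeighbor_of_inNeighbor {o a v : V}
    (hc : IsDegColoring A m (univ.erase o) c) (hoa : A o a) (hvo : A v o) (hav : Adjacent A a v) :
    c v = c a := by
  by_contra hne
  exact hD.false_of_detour_adj hc hoa
    (hD.detour_start hc hoa hav (fun h => hD.oriented.irrefl o (h ▸ hvo)) hne) hvo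

theorem not_adjacent_of_color_ne {o a x : V} (hc : IsDegColoring A m (univ.erase o) c)
    (hoa : A o a) (hax : Adjacent A a x) (hne : c x ≠ c a) : ¬ Adjacent A o x := by
  rintro (hox | hxo)
  · rcases hax with hax | hxa
    · exact hne (hD.color_eq_of_adj_of_outNeighbors hc hox hoa hax).symm
    · exact hne (hD.color_eq_of_adj_of_outNeighbors hc hoa hox hxa)
  · exact hne (hD.color_eq_of_outNeighbor_of_inNeighbor hc hoa hxo hax)

theorem exists_outNeighbor_of_color (hc : IsDegColoring A m (univ.erase t) c) (j : ι) :
    ∃ v, c v = j ∧ A t v := by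
  have hpos : 0 < outDegOn A ((univ.erase t).filter (c · = j)) t :=
    (hD.outDegOn_colorClass hc j).symm ▸ hD.one_le
  obtain ⟨v, hv⟩ := card_pos.mp hpos
  simp only [mem_filter] at hv
  exact ⟨v, hv.1.2, hv.2⟩

theorem exists_descent {o a x : V} (hc : IsDegColoring A m (univ.erase o) c) (hoa : A o a)
    (hax : A a x) (hne : c x ≠ c a) :
    ∃ y, ∃ c₁ : V → ι, IsDegColoring A m (univ.erase a) c₁ ∧ A x y ∧ c₁ y ≠ c₁ x ∧
      (avoidReach A a y).ncard < (avoidReach A o x).ncard := by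
  have hxo : x ≠ o := fun h => hD.oriented o a hoa (h ▸ hax)
  have hnox : ¬ Adjacent A o x := hD.not_adjacent_of_color_ne hc hoa (Or.inl hax) hne
  set c₁ := update c o (c a)
  have hc₁ : IsDegColoring A m (univ.erase a) c₁ := hD.isDegColoring_update hc (Or.inl hoa)
  obtain ⟨y, hy, hxy⟩ :=
    hD.exists_outNeighbor_of_color (hD.isDegColoring_update hc₁ (Or.inl hax)) (c a)
  have hya : y ≠ a := by
    rintro rfl
    simp [c₁, update_of_ne hxo] at hy
    exact hne hy
  have hyo : y ≠ o := fun h => hnox (Or.inr (h ▸ hxy))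
  have hne₁ : c₁ y ≠ c₁ x := by
    simp only [c₁, update_of_ne hya, update_of_ne hyo, update_of_ne hxo] at hy ⊢
    exact hy ▸ hne.symm
  have hnay : ¬ Adjacent A a y := hD.not_adjacent_of_color_ne hc₁ hax (Or.inl hxy) hne₁
  have hdetour := hD.detour_start hc₁ hax (Or.inl hxy) hya hne₁
  -- Through a vertex reachable from `y` outside `N[a]` and adjacent to `o`, the token could
  -- return to `a` having recoloured only `x` among the out-neighbours of `a`.
  have houtside : ∀ z ∈ avoidReach A a y, ¬ Adjacent A o z ∧ z ≠ o := by
    intro z hz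
    obtain ⟨hdz, haz⟩ := hD.detour_of_mem_avoidReach hdetour hax (fun h => hnay (Or.inl h)) hz
    refine ⟨fun hoz => hD.false_of_detour_adj hc₁ hax (hD.detour_step hdz hax haz hoz.symm) hoa, ?_⟩
    rintro rfl
    exact (avoidReach_subset hnay hya hz).1 (Or.inr hoa)
  have hsub : avoidReach A a y ⊆ avoidReach A o x := by
    intro z hz
    induction hz with
    | refl => exact ReflTransGen.single ⟨Or.inl hxy, houtside y ReflTransGen.refl⟩
    | tail hyb hbz ih => exact ih.tail ⟨hbz.1, houtside _ (hyb.tail hbz)⟩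
  refine ⟨y, c₁, hc₁, hxy, hne₁, Set.ncard_lt_ncard ?_ (Set.toFinite _)⟩
  exact (Set.ssubset_iff_of_subset hsub).mpr
    ⟨x, ReflTransGen.refl, fun hx => (avoidReach_subset hnay hya hx).1 (Or.inl hax)⟩

theorem false_of_color_ne_of_outPath {o a x : V} (hc : IsDegColoring A m (univ.erase o) c)
    (hoa : A o a) (hax : A a x) (hne : c x ≠ c a) : False := by
  induction h : (avoidReach A o x).ncard using Nat.strong_induction_on generalizing o a x c with
  | _ n ih =>
    obtain ⟨y, c₁, hc₁, hxy, hne₁, hlt⟩ := hD.exists_descent hc hoa hax hne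
    exact ih _ (h ▸ hlt) hc₁ hax hxy hne₁ rfl

theorem false [Nontrivial ι] : False := by
  obtain ⟨o⟩ := hD.nonempty
  obtain ⟨c, hc⟩ := hD.exists_isDegColoring_erase o
  obtain ⟨a, -, hoa⟩ := hD.exists_outNeighbor_of_color hc (c o)
  obtain ⟨j, hj⟩ := exists_ne (c a)
  obtain ⟨x, hx, hax⟩ :=
    hD.exists_outNeighbor_of_color (hD.isDegColoring_update hc (Or.inl hoa)) j
  have hxo : x ≠ o := by
    rintro rfl
    exact hj (by simpa using hx.symm)
  rw [update_of_ne hxo] at hx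
  exact hD.false_of_color_ne_of_outPath hc hoa hax (hx ▸ hj)

end IsRegularCritical

end RegularCritical

theorem isDegColoring_equivFin [Fintype V] {A : V → V → Prop} [DecidableRel A] {m : ℕ}
    (hm : 1 ≤ m) (hA : ∀ v, ¬ A v v) (S : Finset V) : IsDegColoring A m S (Fintype.equivFin V) :=
  fun _ => (weaklyDegOn_singleton hm (hA _)).mono fun _ hv =>
    mem_singleton.mpr ((Fintype.equivFin V).eq_symm_apply.mpr (mem_filter.mp hv).2)

theorem exists_isDegColoring_of_chiDegOn_le [Fintype V] {A : V → V → Prop} [DecidableRel A]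
    {m n : ℕ} (hm : 1 ≤ m) (hA : ∀ v, ¬ A v v) {S : Finset V} (h : chiDegOn A m S ≤ n) :
    ∃ c : V → Fin n, IsDegColoring A m S c := by
  have hne : {n | ∃ c : V → Fin n, IsDegColoring A m S c}.Nonempty :=
    ⟨_, _, isDegColoring_equivFin hm hA S⟩
  obtain ⟨c, hc⟩ := Nat.sInf_mem hne
  exact ⟨Fin.castLE h ∘ c, hc.comp_injective (Fin.castLE_injective h)⟩

theorem isRegularCritical_of_chiDegOn [Fintype V] [DecidableEq V] {A : V → V → Prop}
    [DecidableRel A] {m k : ℕ} (hm : 1 ≤ m) (hor : Oriented A) (hk : 1 ≤ k)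
    (hchi : chiDegOn A m univ = k) (hcrit : ∀ v, chiDegOn A m (univ.erase v) < k)
    (hdeg : ∀ v, outDegOn A univ v = (k - 1) * m ∧ inDegOn A univ v = (k - 1) * m) :
    IsRegularCritical A m (Fin (k - 1)) where
  oriented := hor
  one_le := hm
  not_isDegColoring c hc := by
    have : chiDegOn A m univ ≤ k - 1 := Nat.sInf_le ⟨c, hc⟩
    omega
  exists_isDegColoring_erase v :=
    exists_isDegColoring_of_chiDegOn_le hm hor.irrefl (Nat.le_sub_one_of_lt (hcrit v))
  outDegOn_univ v := (Fintype.card_fin _).symm ▸ (hdeg v).1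
  inDegOn_univ v := (Fintype.card_fin _).symm ▸ (hdeg v).2

theorem stmt7 [Fintype V] [DecidableEq V] (A : V → V → Prop) [DecidableRel A]
    (m k : ℕ) (hm : 1 ≤ m) (hor : Oriented A)
    (hchi : chiDegOn A m Finset.univ = k)
    (hcrit : ∀ v : V, chiDegOn A m (Finset.univ.erase v) < k)
    (hdeg : ∀ v : V, outDegOn A Finset.univ v = (k - 1) * m ∧
      inDegOn A Finset.univ v = (k - 1) * m) :
    k ≤ 2 := by
  by_contra! hk
  have : Nontrivial (Fin (k - 1)) := Fin.nontrivial_iff_two_le.mpr (by omega)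
  exact (isRegularCritical_of_chiDegOn hm hor (by omega) hchi hcrit hdeg).false
end

section
/- If D is a (k,1)-critical oriented graph in which each vertex v satisfies d⁺(v) = d⁻(v) = k - 1, then k ≤ 2. -/
open Finset

variable {V : Type*}

/-!
Set `m = k - 1 ≥ 2`; we show that `D` is `m`-dicolourable, contradicting `χ_A(D) = k`, by
transposing Lovász's proof of Brooks' theorem to acyclic colourings. If `x` is a cut vertex,
colourings of two vertex-deleted subdigraphs glue at `x`: a set made of two acyclic parts that meet
only in `x` and have no arcs between them is acyclic. Otherwise a minimal-fragment argument over
2-separations, using that every vertex has at least two out- and two in-neighbours and that there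
are no digons, yields a vertex `v` with two out- (or two in-) neighbours `u, u'` such that
`D - u - u'` is connected. As `D` is oriented, `{u, u'}` is acyclic and takes a single colour; the
rest is coloured greedily towards `v`, so every vertex has an uncoloured neighbour when coloured
and therefore sees at most `m - 1` coloured out- or in-neighbours, and `v` finds a free colour
because two of its neighbours share one.
-/
open Relation

variable {A : V → V → Prop}

theorem Oriented.irrefl_s8 (hor : Oriented A) (x : V) : ¬A x x := fun h => hor x x h h

section Acyclic

theorem AcyclicOn.mono {S T : Finset V} (hT : AcyclicOn A T) (hST : S ⊆ T) : AcyclicOn A S :=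
  fun ⟨v, hv, hcyc⟩ =>
    hT ⟨v, hST hv, TransGen.mono (fun _ _ ⟨ha, hb, hab⟩ => ⟨hST ha, hST hb, hab⟩) _ _ hcyc⟩

theorem acyclicOn_iff_exists_sink [Finite V] {S : Finset V} :
    AcyclicOn A S ↔ ∀ T ⊆ S, T.Nonempty → ∃ v ∈ T, ∀ w ∈ T, ¬A v w := by
  classical
  set R : V → V → Prop := fun x y => x ∈ S ∧ y ∈ S ∧ A x y
  constructor
  · intro hS T hTS hT
    -- `R⁺` is a strict order, hence its converse is well founded; a maximal element is a sink
    have : IsTrans V fun a b => TransGen R b a := ⟨fun _ _ _ hab hbc => hbc.trans hab⟩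
    have : Std.Irrefl fun a b : V => TransGen R b a := ⟨fun v hv => by
      obtain ⟨_, hvb, -⟩ := TransGen.head'_iff.mp hv
      exact hS ⟨v, hvb.1, hv⟩⟩
    obtain ⟨v, hvT, hmax⟩ := (Finite.wellFounded_of_trans_of_irrefl
      fun a b : V => TransGen R b a).has_min (T : Set V) hT
    exact ⟨v, hvT, fun w hwT hvw => hmax w hwT (TransGen.single ⟨hTS hvT, hTS hwT, hvw⟩)⟩
  · rintro h ⟨v, hv, hcyc⟩
    obtain ⟨t, htT, hsink⟩ :=
      h (S.filter (TransGen R · v)) (filter_subset _ _) ⟨v, mem_filter.mpr ⟨hv, hcyc⟩⟩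
    obtain ⟨w, htw, hwv⟩ := TransGen.head'_iff.mp (mem_filter.mp htT).2
    refine hsink w (mem_filter.mpr ⟨htw.2.1, ?_⟩) htw.2.2
    rcases reflTransGen_iff_eq_or_transGen.mp hwv with rfl | hwv
    exacts [hcyc, hwv]

theorem acyclicOn_insert [Finite V] [DecidableEq V] {S : Finset V} {x : V}
    (hirr : ∀ x, ¬A x x) (hS : AcyclicOn A S) (hx : (∀ y ∈ S, ¬A x y) ∨ (∀ y ∈ S, ¬A y x)) :
    AcyclicOn A (insert x S) := by
  rw [acyclicOn_iff_exists_sink] at hS ⊢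
  intro T hT hTne
  rcases hx with hout | hin
  · by_cases hxT : x ∈ T
    · refine ⟨x, hxT, fun w hw hxw => ?_⟩
      rcases mem_insert.mp (hT hw) with rfl | hwS
      exacts [hirr w hxw, hout w hwS hxw]
    · exact hS T (fun t ht => (mem_insert.mp (hT ht)).resolve_left (ne_of_mem_of_not_mem ht hxT))
        hTne
  · rcases (T.erase x).eq_empty_or_nonempty with hTx | hTx
    · obtain rfl : T = {x} := ((erase_eq_empty_iff T x).mp hTx).resolve_left hTne.ne_empty
      exact ⟨x, mem_singleton_self x, fun w hw => (mem_singleton.mp hw).symm ▸ hirr x⟩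
    · have hTxS : T.erase x ⊆ S := fun t ht =>
        (mem_insert.mp (hT (mem_of_mem_erase ht))).resolve_left (ne_of_mem_erase ht)
      obtain ⟨v, hv, hsink⟩ := hS (T.erase x) hTxS hTx
      refine ⟨v, mem_of_mem_erase hv, fun w hw => ?_⟩
      rcases eq_or_ne w x with rfl | hwx
      exacts [hin v (hTxS hv), hsink w (mem_erase.mpr ⟨hwx, hw⟩)]

theorem acyclicOn_pair [Finite V] [DecidableEq V] (hor : Oriented A) (u u' : V) :
    AcyclicOn A {u, u'} := by
  have hu' : AcyclicOn A {u'} := by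
    rw [← insert_empty]
    exact acyclicOn_insert hor.irrefl_s8 (fun ⟨_, hv, _⟩ => notMem_empty _ hv) (.inl nofun)
  refine acyclicOn_insert hor.irrefl_s8 hu' ?_
  by_cases h : A u u'
  · exact .inr fun y hy => (mem_singleton.mp hy) ▸ hor u u' h
  · exact .inl fun y hy => (mem_singleton.mp hy) ▸ h

theorem acyclicOn_of_separation [Finite V] [DecidableEq V] {S X : Finset V} {x : V}
    (hsep : ∀ a ∈ X, ∀ b ∉ insert x X, ¬A a b ∧ ¬A b a)
    (hin : AcyclicOn A (S ∩ insert x X)) (hout : AcyclicOn A (S \ X)) : AcyclicOn A S := by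
  rw [acyclicOn_iff_exists_sink] at hin hout ⊢
  intro T hTS hT
  rcases (T \ X).eq_empty_or_nonempty with hTX | hTX
  · have hTX : T ⊆ S ∩ insert x X := fun t ht =>
      mem_inter.mpr ⟨hTS ht, mem_insert_of_mem (sdiff_eq_empty_iff_subset.mp hTX ht)⟩
    exact hin T hTX hT
  obtain ⟨s, hs, hsink⟩ := hout (T \ X) (sdiff_subset_sdiff hTS subset_rfl) hTX
  obtain ⟨hsT, hsX⟩ := mem_sdiff.mp hs
  by_cases hsx : s = x
  · -- `x` is a sink on its outer side, so a sink of the inner side is a sink of `T`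
    subst s
    obtain ⟨s', hs', hsink'⟩ := hin (T ∩ insert x X) (inter_subset_inter_right hTS)
      ⟨x, mem_inter.mpr ⟨hsT, mem_insert_self x X⟩⟩
    obtain ⟨hs'T, hs'X⟩ := mem_inter.mp hs'
    refine ⟨s', hs'T, fun w hw => ?_⟩
    by_cases hwX : w ∈ insert x X
    · exact hsink' w (mem_inter.mpr ⟨hw, hwX⟩)
    rcases mem_insert.mp hs'X with rfl | hs'X
    · exact hsink w (mem_sdiff.mpr ⟨hw, fun h => hwX (mem_insert_of_mem h)⟩)
    · exact (hsep s' hs'X w hwX).1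
  · refine ⟨s, hsT, fun w hw => ?_⟩
    by_cases hwX : w ∈ X
    · exact (hsep w hwX s (by simp [hsx, hsX])).2
    · exact hsink w (mem_sdiff.mpr ⟨hw, hwX⟩)

end Acyclic

section Coloring

def IsAcyclicColoring (A : V → V → Prop) (S : Finset V) {m : ℕ} (c : V → Fin m) : Prop :=
  ∀ i, AcyclicOn A (S.filter (c · = i))

def AcyclicColorable (A : V → V → Prop) (S : Finset V) (m : ℕ) : Prop :=
  ∃ c : V → Fin m, IsAcyclicColoring A S c

variable {S T : Finset V} {m : ℕ}

theorem AcyclicColorable.mono_set (h : AcyclicColorable A T m) (hST : S ⊆ T) :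
    AcyclicColorable A S m :=
  let ⟨c, hc⟩ := h
  ⟨c, fun i => (hc i).mono (filter_subset_filter _ hST)⟩

theorem AcyclicColorable.mono_colors {m' : ℕ} (h : AcyclicColorable A S m) (hm : m ≤ m') :
    AcyclicColorable A S m' := by
  obtain ⟨c, hc⟩ := h
  refine ⟨fun v => Fin.castLE hm (c v), fun i => ?_⟩
  by_cases hi : (i : ℕ) < m
  · refine (hc ⟨i, hi⟩).mono fun v hv => ?_
    obtain ⟨hvS, hvi⟩ := mem_filter.mp hv
    exact mem_filter.mpr ⟨hvS, Fin.ext (by simpa using congrArg Fin.val hvi)⟩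
  · have hempty : S.filter (fun v => Fin.castLE hm (c v) = i) = ∅ :=
      filter_eq_empty_iff.mpr fun v _ hv => hi (by rw [← hv, Fin.val_castLE]; exact (c v).isLt)
    rw [hempty]
    exact fun ⟨v, hv, _⟩ => notMem_empty v hv

theorem AcyclicColorable.chiAcyclicOn_le (h : AcyclicColorable A S m) : chiAcyclicOn A S ≤ m :=
  Nat.sInf_le h

theorem AcyclicColorable.acyclicColorable_chiAcyclicOn (h : AcyclicColorable A S m) :
    AcyclicColorable A S (chiAcyclicOn A S) :=
  Nat.sInf_mem (s := {k | AcyclicColorable A S k}) ⟨m, h⟩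

theorem acyclicColorable_of_isEmpty [IsEmpty V] : AcyclicColorable A S m :=
  ⟨isEmptyElim, fun _ ⟨v, _⟩ => isEmptyElim v⟩

theorem exists_forall_ne_of_card_image_lt {P : Finset V} (c : V → Fin m)
    (h : (P.image c).card < m) :
    ∃ i, ∀ y ∈ P, c y ≠ i := by
  obtain ⟨i, -, hi⟩ := exists_mem_notMem_of_card_lt_card (s := P.image c) (t := univ)
    (by rwa [card_univ, Fintype.card_fin])
  exact ⟨i, fun y hy hyi => hi (mem_image.mpr ⟨y, hy, hyi⟩)⟩

theorem IsAcyclicColoring.extend [Finite V] [DecidableEq V] [DecidableRel A] {P : Finset V}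
    {c : V → Fin m} {x : V} (hirr : ∀ x, ¬A x x) (hc : IsAcyclicColoring A P c) (hx : x ∉ P)
    (hfree : ((P.filter (A x ·)).image c).card < m ∨ ((P.filter (A · x)).image c).card < m) :
    ∃ i, IsAcyclicColoring A (insert x P) (Function.update c x i) := by
  have hmiss : ∃ i, (∀ y ∈ P, c y = i → ¬A x y) ∨ (∀ y ∈ P, c y = i → ¬A y x) := by
    rcases hfree with h | h <;> obtain ⟨i, hi⟩ := exists_forall_ne_of_card_image_lt c h
    · exact ⟨i, .inl fun y hy hyi hxy => hi y (mem_filter.mpr ⟨hy, hxy⟩) hyi⟩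
    · exact ⟨i, .inr fun y hy hyi hyx => hi y (mem_filter.mpr ⟨hy, hyx⟩) hyi⟩
  obtain ⟨i, hi⟩ := hmiss
  refine ⟨i, fun j => ?_⟩
  by_cases hji : j = i
  · subst hji
    refine (acyclicOn_insert (x := x) hirr (hc j) ?_).mono fun y hy => ?_
    · exact hi.imp (fun h y hy => h y (mem_filter.mp hy).1 (mem_filter.mp hy).2)
        (fun h y hy => h y (mem_filter.mp hy).1 (mem_filter.mp hy).2)
    · obtain ⟨hyP, hyj⟩ := mem_filter.mp hy
      rcases eq_or_ne y x with rfl | hyx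
      · exact mem_insert_self y _
      · rw [Function.update_of_ne hyx] at hyj
        exact mem_insert_of_mem (mem_filter.mpr ⟨(mem_insert.mp hyP).resolve_left hyx, hyj⟩)
  · refine (hc j).mono fun y hy => ?_
    obtain ⟨hyP, hyj⟩ := mem_filter.mp hy
    have hyx : y ≠ x := by rintro rfl; simp only [Function.update_self] at hyj; exact hji hyj.symm
    rw [Function.update_of_ne hyx] at hyj
    exact mem_filter.mpr ⟨(mem_insert.mp hyP).resolve_left hyx, hyj⟩

end Coloring

section Greedy

variable {m : ℕ}

theorem card_image_filter_lt_of_notMem [Fintype V] {Q : V → Prop} [DecidablePred Q]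
    {P : Finset V} (c : V → Fin m) (hQ : (univ.filter Q).card ≤ m) {w : V} (hw : w ∉ P)
    (hwQ : Q w) :
    ((P.filter Q).image c).card < m :=
  calc ((P.filter Q).image c).card ≤ (P.filter Q).card := card_image_le
    _ < (univ.filter Q).card := card_lt_card <|
      (ssubset_iff_of_subset (filter_subset_filter _ (subset_univ P))).mpr
        ⟨w, mem_filter.mpr ⟨mem_univ w, hwQ⟩, fun h => hw (mem_filter.mp h).1⟩
    _ ≤ m := hQ

theorem card_image_lt_of_collision {N : Finset V} (c : V → Fin m) (hN : N.card ≤ m)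
    {u u' : V} (hu : u ∈ N) (hu' : u' ∈ N) (huu : u ≠ u') (hc : c u = c u') :
    (N.image c).card < m :=
  (card_image_le.lt_of_ne fun h => huu (card_image_iff.mp h hu hu' hc)).trans_le hN

theorem IsAcyclicColoring.extend_of_degenerate [Fintype V] [DecidableEq V] [DecidableRel A]
    {P T : Finset V} {c : V → Fin m} (hirr : ∀ x, ¬A x x) (hout : ∀ x, outDegOn A univ x ≤ m)
    (hin : ∀ x, inDegOn A univ x ≤ m) (hc : IsAcyclicColoring A P c) (hPT : Disjoint P T)
    (hT : ∀ T' ⊆ T, T'.Nonempty → ∃ x ∈ T', ∃ w ∉ P ∪ T', A x w ∨ A w x) :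
    ∃ c' : V → Fin m, (∀ y ∈ P, c' y = c y) ∧ IsAcyclicColoring A (P ∪ T) c' := by
  induction T using Finset.strongInduction with
  | H T ih =>
  rcases T.eq_empty_or_nonempty with rfl | hTne
  · exact ⟨c, fun _ _ => rfl, by rwa [union_empty]⟩
  obtain ⟨x, hxT, w, hw, hxw⟩ := hT T subset_rfl hTne
  obtain ⟨c', hc'P, hc'⟩ := ih (T.erase x) (erase_ssubset hxT)
    (disjoint_of_subset_right (erase_subset x T) hPT)
    fun T' hT' => hT T' (hT'.trans (erase_subset x T))
  have hxP : x ∉ P := disjoint_right.mp hPT hxT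
  have hwP : w ∉ P ∪ T.erase x := fun h => hw (union_subset_union_right (erase_subset x T) h)
  obtain ⟨i, hi⟩ := hc'.extend hirr (by simp [hxP]) <| hxw.imp
    (card_image_filter_lt_of_notMem c' (hout x) hwP)
    (card_image_filter_lt_of_notMem c' (hin x) hwP)
  refine ⟨Function.update c' x i, fun y hy => ?_, ?_⟩
  · rw [Function.update_of_ne (ne_of_mem_of_not_mem hy hxP)]
    exact hc'P y hy
  · rwa [← union_insert, insert_erase hxT] at hi

end Greedy

section Connectivity

def ReachOn (A : V → V → Prop) (U : Finset V) : V → V → Prop :=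
  ReflTransGen fun a b => a ∈ U ∧ b ∈ U ∧ (A a b ∨ A b a)

theorem ReachOn.symm {U : Finset V} {a b : V} (h : ReachOn A U a b) : ReachOn A U b a := by
  induction h with
  | refl => exact .refl
  | tail _ hst ih => exact ih.head ⟨hst.2.1, hst.1, hst.2.2.symm⟩

theorem ReachOn.mono {U W : Finset V} {a b : V} (h : ReachOn A U a b) (hUW : U ⊆ W) :
    ReachOn A W a b :=
  ReflTransGen.mono (fun _ _ ⟨ha, hb, hab⟩ => ⟨hUW ha, hUW hb, hab⟩) _ _ h

theorem ReachOn.mem {U : Finset V} {a b : V} (h : ReachOn A U a b) (ha : a ∈ U) : b ∈ U := by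
  induction h with
  | refl => exact ha
  | tail _ hst => exact hst.2.1

def IsClosedIn (A : V → V → Prop) (U C : Finset V) : Prop :=
  ∀ c ∈ C, ∀ z ∈ U, (A c z ∨ A z c) → z ∈ C

theorem IsClosedIn.mem_of_reachOn {U C : Finset V} {c z : V} (hC : IsClosedIn A U C)
    (hc : c ∈ C) (h : ReachOn A U c z) : z ∈ C := by
  induction h with
  | refl => exact hc
  | tail _ hst ih => exact hC _ ih _ hst.2.1 hst.2.2

open Classical in
noncomputable def componentOn (A : V → V → Prop) (U : Finset V) (y : V) : Finset V :=
  U.filter (ReachOn A U y)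

theorem mem_componentOn {U : Finset V} {y z : V} :
    z ∈ componentOn A U y ↔ z ∈ U ∧ ReachOn A U y z := by
  simp [componentOn]

theorem isClosedIn_componentOn (U : Finset V) (y : V) : IsClosedIn A U (componentOn A U y) :=
  fun _ hc _ hz hcz =>
    mem_componentOn.mpr ⟨hz, (mem_componentOn.mp hc).2.tail ⟨(mem_componentOn.mp hc).1, hz, hcz⟩⟩

theorem WeaklyConnectedOn.exists_adj_notMem [DecidableEq V] {U T : Finset V} {v : V}
    (hconn : WeaklyConnectedOn A U) (hv : v ∈ U) (hT : T ⊆ U.erase v) (hTne : T.Nonempty) :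
    ∃ x ∈ T, ∃ w ∈ U, w ∉ T ∧ (A x w ∨ A w x) := by
  obtain ⟨t, ht⟩ := hTne
  by_contra! h
  have hcl : IsClosedIn A U T := fun x hx w hw hxw => by
    by_contra hwT
    exact (h x hx w hw hwT).1 (hxw.resolve_right (h x hx w hw hwT).2)
  exact notMem_erase v U (hT (hcl.mem_of_reachOn ht (hconn t (mem_of_mem_erase (hT ht)) v hv)))

variable [Fintype V] [DecidableEq V]

def IsFragment (A : V → V → Prop) (p q : V) (C : Finset V) : Prop :=
  p ≠ q ∧ C.Nonempty ∧ C ⊂ univ \ {p, q} ∧ IsClosedIn A (univ \ {p, q}) C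

theorem IsFragment.symm {p q : V} {C : Finset V} (h : IsFragment A p q C) :
    IsFragment A q p C := by
  rw [IsFragment, pair_comm]
  exact ⟨h.1.symm, h.2⟩

theorem isFragment_componentOn {p q y z : V} (hpq : p ≠ q) (hy : y ∈ univ \ {p, q})
    (hz : z ∈ univ \ {p, q}) (hyz : ¬ReachOn A (univ \ {p, q}) y z) :
    IsFragment A p q (componentOn A (univ \ {p, q}) y) :=
  ⟨hpq, ⟨y, mem_componentOn.mpr ⟨hy, .refl⟩⟩,
    (ssubset_iff_of_subset fun _ h => (mem_componentOn.mp h).1).mpr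
      ⟨z, hz, fun h => hyz (mem_componentOn.mp h).2⟩,
    isClosedIn_componentOn _ _⟩

theorem IsFragment.reachOn {p q y : V} {C : Finset V} (hC : IsFragment A p q C)
    (hp : WeaklyConnectedOn A (univ.erase p)) (hyC : y ∉ C) (hyp : y ≠ p) :
    ReachOn A ((univ \ C).erase p) y q := by
  obtain ⟨hpq, -, hCU, hCcl⟩ := hC
  set W := (univ \ C).erase p
  have hyW : y ∈ W := by simp [W, hyC, hyp]
  -- a path avoiding `p` can only enter `C` from `q`
  have key : ∀ z, ReachOn A (univ.erase p) y z → ReachOn A W y z ∨ ReachOn A W y q := by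
    intro z hz
    induction hz with
    | refl => exact .inl .refl
    | tail _ hst ih =>
      rename_i s t _
      refine ih.elim (fun hs => ?_) .inr
      have hsW := hs.mem hyW
      by_cases htC : t ∈ C
      · obtain rfl : s = q := by
          by_contra hsq
          have hsU : s ∈ univ \ {p, q} := by simpa [hsq] using ne_of_mem_erase hsW
          exact (mem_sdiff.mp (mem_of_mem_erase hsW)).2 (hCcl t htC s hsU hst.2.2.symm)
        exact .inr hs
      · exact .inl (hs.tail ⟨hsW, by simpa [W, htC] using ne_of_mem_erase hst.2.1, hst.2.2⟩)
  exact (key q (hp y (by simpa using hyp) q (by simpa using hpq.symm))).elim id id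

/-- A component of `D - a - b` avoiding `q` would otherwise be a fragment strictly inside `C`. -/
theorem IsFragment.connected_of_minimal {p q a b : V} {C : Finset V}
    (hcut : ∀ x, WeaklyConnectedOn A (univ.erase x)) (hC : IsFragment A p q C)
    (hmin : ∀ p' q' C', IsFragment A p' q' C' → C.card ≤ C'.card)
    (ha : a ∈ C) (hb : b ∈ C ∨ b = p) (hab : a ≠ b) : WeaklyConnectedOn A (univ \ {a, b}) := by
  set U' := univ \ {a, b}
  have hCU : C ⊆ univ \ {p, q} := hC.2.2.1.subset
  have hU' : ∀ z, z ∉ C → z ≠ p → z ∈ U' := fun z hzC hzp => by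
    rcases hb with hb | rfl <;> simp [U'] <;> grind
  have hqU' : q ∈ U' := hU' q (fun h => by simpa using hCU h) hC.1.symm
  have hWU' : (univ \ C).erase p ⊆ U' := fun z hz => by
    simp only [mem_erase, mem_sdiff, mem_univ, true_and] at hz
    exact hU' z hz.2 hz.1
  have hreach : ∀ y ∈ U', y ∉ C → ReachOn A U' y q := by
    intro y hy hyC
    rcases eq_or_ne y p with rfl | hyp
    · -- `y` reaches `q` through any vertex `z` outside `C`, which exists as `C` is proper
      have hbC : b ∈ C := hb.resolve_right fun h => by simp [U', h] at hy
      obtain ⟨z, hzU, hzC⟩ := (ssubset_iff_of_subset hCU).mp hC.2.2.1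
      have hzp : z ≠ y := fun h => by simp [h] at hzU
      have hzq : z ≠ q := fun h => by simp [h] at hzU
      have hCc : univ \ C ⊆ U' := fun w hw => by
        simp only [mem_sdiff, mem_univ, true_and] at hw
        simp only [U', mem_sdiff, mem_univ, true_and, mem_insert, mem_singleton]
        rintro (rfl | rfl) <;> contradiction
      exact ((hC.symm.reachOn (hcut q) hzC hzq).mono
        ((erase_subset _ _).trans hCc)).symm.trans ((hC.reachOn (hcut y) hzC hzp).mono hWU')
    · exact (hC.reachOn (hcut p) hyC hyp).mono hWU'
  intro s hs t ht
  by_contra hst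
  obtain ⟨y, hy, hyq⟩ : ∃ y ∈ U', ¬ReachOn A U' y q := by
    by_contra! h
    exact hst ((h s hs).trans (h t ht).symm)
  have hYC : componentOn A U' y ⊆ C.erase a := fun z hz => by
    obtain ⟨hzU', hyz⟩ := mem_componentOn.mp hz
    refine mem_erase.mpr ⟨fun h => by simp [U', h] at hzU', ?_⟩
    by_contra hzC
    exact hyq (hyz.trans (hreach z hzU' hzC))
  have h₁ : C.card ≤ (componentOn A U' y).card :=
    hmin a b _ (isFragment_componentOn hab hy hqU' hyq)
  have h₂ := card_le_card hYC
  rw [card_erase_of_mem ha] at h₂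
  have h₃ := hC.2.1.card_pos
  omega

end Connectivity

def SameTypeNeighbors (A : V → V → Prop) (v u u' : V) : Prop :=
  (A v u ∧ A v u') ∨ (A u v ∧ A u' v)

theorem exists_sameTypeNeighbors_connected [Fintype V] [DecidableEq V] [DecidableRel A]
    [Nonempty V] (hor : Oriented A) (hout : ∀ x, 2 ≤ outDegOn A univ x)
    (hin : ∀ x, 2 ≤ inDegOn A univ x) (hcut : ∀ x, WeaklyConnectedOn A (univ.erase x)) :
    ∃ v u u', u ≠ u' ∧ SameTypeNeighbors A v u u' ∧ WeaklyConnectedOn A (univ \ {u, u'}) := by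
  by_contra! hno
  have hfrag : ∃ t : V × V × Finset V, IsFragment A t.1 t.2.1 t.2.2 := by
    obtain ⟨v⟩ := ‹Nonempty V›
    obtain ⟨u, hu, u', hu', huu⟩ := one_lt_card.mp (hout v)
    have h := hno v u u' huu (.inl ⟨(mem_filter.mp hu).2, (mem_filter.mp hu').2⟩)
    simp only [WeaklyConnectedOn, not_forall] at h
    obtain ⟨s, hs, t, ht, hst⟩ := h
    exact ⟨(u, u', _), isFragment_componentOn huu hs ht hst⟩
  obtain ⟨⟨p, q, C⟩, hC, hmin⟩ :=
    (measure fun t : V × V × Finset V => t.2.2.card).wf.has_min {t | IsFragment A t.1 t.2.1 t.2.2}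
      hfrag
  have hmin' : ∀ p' q' C', IsFragment A p' q' C' → C.card ≤ C'.card :=
    fun p' q' C' h => not_lt.mp (hmin (p', q', C') h)
  obtain ⟨y, hy⟩ := hC.2.1
  have hnbr : ∀ z, (A y z ∨ A z y) → z ∉ C → z = p ∨ z = q := fun z hz hzC => by
    by_contra h
    exact hzC (hC.2.2.2 y hy z (by simpa using h) hz)
  -- a neighbour `a ∈ C` of `y` and a second neighbour `b` of the same type would form a
  -- separating pair, against the minimality of `C`
  have hsep : ∀ a b, a ≠ b → SameTypeNeighbors A y a b → a ∉ C := by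
    intro a b hab hyab haC
    refine hno y a b hab hyab ?_
    by_cases hbC : b ∈ C
    · exact hC.connected_of_minimal hcut hmin' haC (.inl hbC) hab
    have hyb : A y b ∨ A b y := hyab.imp And.right And.right
    rcases hnbr b hyb hbC with rfl | rfl
    · exact hC.connected_of_minimal hcut hmin' haC (.inr rfl) hab
    · exact hC.symm.connected_of_minimal hcut hmin' haC (.inr rfl) hab
  -- hence the out- and the in-neighbours of `y` are both `{p, q}`, a digon
  have hpN : ∀ N : Finset V, 1 < N.card → (∀ a ∈ N, ∀ b ∈ N, SameTypeNeighbors A y a b) →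
      p ∈ N := by
    intro N hN hNy
    have hNpq : N ⊆ {p, q} := fun a ha => by
      obtain ⟨b, hb, hba⟩ := exists_mem_ne hN a
      have hya := hNy a ha b hb
      simpa using hnbr a (hya.imp And.left And.left) (hsep a b hba.symm hya)
    have := eq_of_subset_of_card_le hNpq ((card_le_two).trans hN)
    exact this ▸ mem_insert_self p {q}
  have hyp := hpN (univ.filter (A y ·)) (hout y) fun a ha b hb =>
    .inl ⟨(mem_filter.mp ha).2, (mem_filter.mp hb).2⟩
  have hpy := hpN (univ.filter (A · y)) (hin y) fun a ha b hb =>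
    .inr ⟨(mem_filter.mp ha).2, (mem_filter.mp hb).2⟩
  exact hor y p (mem_filter.mp hyp).2 (mem_filter.mp hpy).2

theorem SameTypeNeighbors.card_image_lt [Fintype V] [DecidableRel A] {m : ℕ} {v u u' : V}
    {P : Finset V} {c : V → Fin m} (hv : SameTypeNeighbors A v u u')
    (hout : ∀ x, outDegOn A univ x ≤ m) (hin : ∀ x, inDegOn A univ x ≤ m) (huu : u ≠ u')
    (hu : u ∈ P) (hu' : u' ∈ P) (hc : c u = c u') :
    ((P.filter (A v ·)).image c).card < m ∨ ((P.filter (A · v)).image c).card < m := by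
  rcases hv with ⟨h, h'⟩ | ⟨h, h'⟩
  · exact .inl <| card_image_lt_of_collision c
      ((card_le_card (filter_subset_filter _ (subset_univ P))).trans (hout v))
      (mem_filter.mpr ⟨hu, h⟩) (mem_filter.mpr ⟨hu', h'⟩) huu hc
  · exact .inr <| card_image_lt_of_collision c
      ((card_le_card (filter_subset_filter _ (subset_univ P))).trans (hin v))
      (mem_filter.mpr ⟨hu, h⟩) (mem_filter.mpr ⟨hu', h'⟩) huu hc

section Colorability

variable [Fintype V] [DecidableEq V] {m : ℕ}

/-- Colourings of `D - y₁` and `D - y₀`, for `y₀, y₁` on different sides of the cut vertex `x`,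
glue after permuting the colours of the second so that both agree on `x`. -/
theorem acyclicColorable_of_not_connected_erase {x : V}
    (hcol : ∀ v, AcyclicColorable A (univ.erase v) m)
    (hx : ¬WeaklyConnectedOn A (univ.erase x)) : AcyclicColorable A univ m := by
  simp only [WeaklyConnectedOn, not_forall] at hx
  obtain ⟨y₀, hy₀, y₁, hy₁, h01⟩ := hx
  set X := componentOn A (univ.erase x) y₀
  have hy₀X : y₀ ∈ X := mem_componentOn.mpr ⟨hy₀, .refl⟩
  have hy₁X : y₁ ∉ X := fun h => h01 (mem_componentOn.mp h).2
  have hxX : x ∉ X := fun h => by simpa using (mem_componentOn.mp h).1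
  have hsep : ∀ a ∈ X, ∀ b ∉ insert x X, ¬A a b ∧ ¬A b a := fun a ha b hb => not_or.mp
    fun hab => hb (mem_insert_of_mem (isClosedIn_componentOn _ _ a ha b
      (mem_erase.mpr ⟨fun h => hb (h ▸ mem_insert_self x X), mem_univ b⟩) hab))
  obtain ⟨c₁, hc₁⟩ := hcol y₁
  obtain ⟨c₂, hc₂⟩ := hcol y₀
  let σ := Equiv.swap (c₂ x) (c₁ x)
  refine ⟨fun z => if z ∈ X then c₁ z else σ (c₂ z), fun i => acyclicOn_of_separation hsep
    ((hc₁ i).mono fun z hz => ?_) ((hc₂ (σ.symm i)).mono fun z hz => ?_)⟩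
  · obtain ⟨hzi, hzX⟩ := mem_inter.mp hz
    have hzy₁ : z ≠ y₁ := by
      rintro rfl
      rcases mem_insert.mp hzX with rfl | h
      exacts [ne_of_mem_erase hy₁ rfl, hy₁X h]
    refine mem_filter.mpr ⟨mem_erase.mpr ⟨hzy₁, mem_univ z⟩, ?_⟩
    rw [← (mem_filter.mp hzi).2]
    rcases mem_insert.mp hzX with rfl | h
    · simp [hxX, σ]
    · simp [h]
  · obtain ⟨hzi, hzX⟩ := mem_sdiff.mp hz
    refine mem_filter.mpr ⟨mem_erase.mpr ⟨fun h => hzX (h ▸ hy₀X), mem_univ z⟩, ?_⟩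
    rw [Equiv.eq_symm_apply, ← (mem_filter.mp hzi).2]
    simp [hzX]

theorem acyclicColorable_of_sameTypeNeighbors [DecidableRel A] (hor : Oriented A)
    (hout : ∀ x, outDegOn A univ x ≤ m) (hin : ∀ x, inDegOn A univ x ≤ m) {v u u' : V}
    (huu : u ≠ u') (hv : SameTypeNeighbors A v u u')
    (hconn : WeaklyConnectedOn A (univ \ {u, u'})) : AcyclicColorable A univ m := by
  have hvu : v ≠ u ∧ v ≠ u' := by
    constructor <;> rintro rfl <;> rcases hv with ⟨h, h'⟩ | ⟨h, h'⟩ <;> exact hor.irrefl_s8 _ ‹_›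
  have hvU : v ∈ univ \ {u, u'} := by simp [hvu.1, hvu.2]
  have hm : 0 < m := by
    rcases hv with ⟨h, -⟩ | ⟨h, -⟩
    · exact (card_pos.mpr ⟨u, mem_filter.mpr ⟨mem_univ u, h⟩⟩).trans_le (hout v)
    · exact (card_pos.mpr ⟨u, mem_filter.mpr ⟨mem_univ u, h⟩⟩).trans_le (hin v)
  have hc₀ : IsAcyclicColoring A {u, u'} fun _ => (⟨0, hm⟩ : Fin m) :=
    fun _ => (acyclicOn_pair hor u u').mono (filter_subset _ _)
  have hdegen : ∀ T' ⊆ (univ \ {u, u'}).erase v, T'.Nonempty →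
      ∃ x ∈ T', ∃ w ∉ {u, u'} ∪ T', A x w ∨ A w x := fun T' hT' hne => by
    obtain ⟨x, hx, w, hw, hwT', hxw⟩ := hconn.exists_adj_notMem hvU hT' hne
    exact ⟨x, hx, w, by simp_all, hxw⟩
  obtain ⟨c, hcuu, hc⟩ := hc₀.extend_of_degenerate hor.irrefl_s8 hout hin
    (by simp [disjoint_left]) hdegen
  have hcu : c u = c u' := (hcuu u (by simp)).trans (hcuu u' (by simp)).symm
  have hrest : {u, u'} ∪ (univ \ {u, u'}).erase v = univ.erase v := by
    ext z
    simp only [mem_union, mem_insert, mem_singleton, mem_erase, mem_sdiff, mem_univ, true_and]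
    grind
  rw [hrest] at hc
  have hu : u ∈ univ.erase v := by simp [Ne.symm hvu.1]
  have hu' : u' ∈ univ.erase v := by simp [Ne.symm hvu.2]
  obtain ⟨i, hi⟩ := hc.extend hor.irrefl_s8 (notMem_erase v univ)
    (hv.card_image_lt hout hin huu hu hu' hcu)
  exact ⟨_, by rwa [insert_erase (mem_univ v)] at hi⟩

end Colorability

theorem stmt8 [Fintype V] [DecidableEq V] (A : V → V → Prop) [DecidableRel A]
    (k : ℕ) (hor : Oriented A)
    (hchi : chiAcyclicOn A Finset.univ = k)
    (hcrit : ∀ v : V, chiAcyclicOn A (Finset.univ.erase v) < k)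
    (hdeg : ∀ v : V, outDegOn A Finset.univ v = k - 1 ∧
      inDegOn A Finset.univ v = k - 1) :
    k ≤ 2 := by
  by_contra! hk
  have hcolk : AcyclicColorable A univ k :=
    hchi ▸ Nat.sInf_mem (Nat.nonempty_of_pos_sInf (show 0 < chiAcyclicOn A univ by omega))
  have hcol : ∀ v, AcyclicColorable A (univ.erase v) (k - 1) := fun v =>
    ((hcolk.mono_set (erase_subset v univ)).acyclicColorable_chiAcyclicOn).mono_colors
      (by have := hcrit v; omega)
  suffices AcyclicColorable A univ (k - 1) by have := this.chiAcyclicOn_le; omega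
  rcases isEmpty_or_nonempty V with hV | hV
  · exact acyclicColorable_of_isEmpty
  by_cases hcut : ∀ x, WeaklyConnectedOn A (univ.erase x)
  · obtain ⟨v, u, u', huu, hv, hconn⟩ := exists_sameTypeNeighbors_connected hor
      (fun x => by have := (hdeg x).1; omega) (fun x => by have := (hdeg x).2; omega) hcut
    exact acyclicColorable_of_sameTypeNeighbors hor (fun x => (hdeg x).1.le)
      (fun x => (hdeg x).2.le) huu hv hconn
  · obtain ⟨x, hx⟩ := not_forall.mp hcut
    exact acyclicColorable_of_not_connected_erase hcol hx
end
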